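/- Let p and q be primes, r and s positive integers, F_{q^r} the field with q^r elements, and let the elementary abelian group (C_p)^s act trivially on F_{q^r}^*. If p does not divide q^r − 1, then H²((C_p)^s, F_{q^r}^*) is trivial; if p divides q^r − 1, then H²((C_p)^s, F_{q^r}^*) is isomorphic to the elementary abelian p-group (C_p)^{s(s+1)/2} of rank binom(s+1, 2). -/

import Mathlib

def IsTwoCocycle {G F : Type*} [Group G] [Field F] (η : G →* RingAut F)
    (f : G → G → Fˣ) : Prop :=
  ∀ g h k : G, η g (f h k : F) * ((f g (h * k) : Fˣ) : F) =
    ((f g h : Fˣ) : F) * ((f (g * h) k : Fˣ) : F)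

def IsTwoCoboundary {G F : Type*} [Group G] [Field F] (η : G →* RingAut F)
    (f : G → G → Fˣ) : Prop :=
  ∃ r : G → Fˣ, ∀ g h : G,
    (f g h : F) = (r g : F) * η g (r h : F) * (((r (g * h))⁻¹ : Fˣ) : F)

def Cohomologous {G F : Type*} [Group G] [Field F] (η : G →* RingAut F)
    (f₁ f₂ : G → G → Fˣ) : Prop :=
  IsTwoCoboundary η fun g h => f₁ g h * (f₂ g h)⁻¹

/-- The group of 2-cocycles, as a subgroup of all functions `G → G → Fˣ`. -/
def twoCocycles {G F : Type*} [Group G] [Field F] (η : G →* RingAut F) :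
    Subgroup (G → G → Fˣ) where
  carrier := {f | IsTwoCocycle η f}
  one_mem' := by intro g h k; simp
  mul_mem' := by
    intro a b ha hb g h k
    simp only [Pi.mul_apply, Units.val_mul, map_mul]
    rw [mul_mul_mul_comm, ha g h k, hb g h k, mul_mul_mul_comm]
  inv_mem' := by
    intro a ha g h k
    simp only [Pi.inv_apply, Units.val_inv_eq_inv_val, map_inv₀]
    rw [← mul_inv, ← mul_inv, ha g h k]

/-- The group of 2-coboundaries, as a subgroup of all functions `G → G → Fˣ`. -/
def twoCoboundaries {G F : Type*} [Group G] [Field F] (η : G →* RingAut F) :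
    Subgroup (G → G → Fˣ) where
  carrier := {f | IsTwoCoboundary η f}
  one_mem' := ⟨1, by intro g h; simp⟩
  mul_mem' := by
    rintro a b ⟨r, hr⟩ ⟨t, ht⟩
    refine ⟨r * t, fun g h => ?_⟩
    simp only [Pi.mul_apply, Units.val_mul, map_mul, mul_inv, hr g h, ht g h,
      Units.val_inv_eq_inv_val]
    ring
  inv_mem' := by
    rintro a ⟨r, hr⟩
    refine ⟨r⁻¹, fun g h => ?_⟩
    simp only [Pi.inv_apply, Units.val_inv_eq_inv_val, map_inv₀, hr g h, inv_inv, mul_inv]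

/-- The second cohomology group `H²_η(G, F^*)`: 2-cocycles modulo 2-coboundaries. -/
abbrev H2 {G F : Type*} [Group G] [Field F] (η : G →* RingAut F) :=
  twoCocycles η ⧸ ((twoCoboundaries η).subgroupOf (twoCocycles η))

/-- The norm map `x ↦ ∏_{i=0}^{n-1} σ^i(x)` on `F^*`. -/
def cyclicNormHom {G F : Type*} [Group G] [Field F] (η : G →* RingAut F) (σ : G) (n : ℕ) :
    Fˣ →* Fˣ where
  toFun x := ∏ i ∈ Finset.range n, Units.map (η (σ ^ i)).toMonoidHom x
  map_one' := by simp
  map_mul' x y := by simp [Finset.prod_mul_distrib]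

/-- The subgroup `(F^*)^{C_n}` of elements of `F^*` fixed by the action. -/
def fixedUnits {G F : Type*} [Group G] [Field F] (η : G →* RingAut F) :
    Subgroup Fˣ where
  carrier := {x | ∀ g : G, η g (x : F) = (x : F)}
  one_mem' := by intro g; simp
  mul_mem' := by intro a b ha hb g; simp [ha g, hb g]
  inv_mem' := by intro a ha g; simp [ha g]

/-!
For `G = (C_n)^s` with basis `e_i`, a 2-cocycle `f : G → G → Fˣ` (trivial action) has two kinds
of invariants: the commutator pairing `f (e_i, e_j) / f (e_j, e_i)` for `i < j`, an `n`-th root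
of unity, and for each `i` the class in `Fˣ / (Fˣ)^n` of `∏_{k<n} f (e_i^k, e_i)`, which is the
`n`-th power of a lift of `e_i` in the extension defined by `f`. Both vanish on coboundaries.
If they vanish, `f` is symmetric, so the extension is abelian, and every `e_i` has a lift of
order `n`; these lifts span a splitting, hence `f` is a coboundary. Conversely every value of
the invariants is attained by products of the cocycles `ζ ^ (x_i y_j)` and
`a ^ carry (x_i, y_i)`. So `H²((C_n)^s, Fˣ) ≅ μ_n^(s choose 2) × (Fˣ/(Fˣ)^n)^s` for every field.
For a finite field `Fˣ` is cyclic of order `q^r - 1`, so `μ_p` and `Fˣ/(Fˣ)^p` both have order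
`gcd (q^r - 1) p`, which is `p` or `1`.
-/

open Finset

section TrivialAction

variable {G F : Type*} [Group G] [Field F]

lemma mem_twoCocycles_one_iff {f : G → G → Fˣ} :
    f ∈ twoCocycles (1 : G →* RingAut F) ↔
      ∀ g h k, f h k * f g (h * k) = f g h * f (g * h) k := by
  simp [twoCocycles, IsTwoCocycle, Units.ext_iff]

lemma mem_twoCoboundaries_one_iff {f : G → G → Fˣ} :
    f ∈ twoCoboundaries (1 : G →* RingAut F) ↔
      ∃ r : G → Fˣ, ∀ g h, f g h = r g * r h / r (g * h) := by
  simp [twoCoboundaries, IsTwoCoboundary, Units.ext_iff, div_eq_mul_inv]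

lemma twoCocycle_one_left {f : G → G → Fˣ} (hf : f ∈ twoCocycles (1 : G →* RingAut F))
    (x : G) : f 1 x = f 1 1 := by
  simpa using mem_twoCocycles_one_iff.mp hf 1 1 x

lemma twoCocycle_one_right {f : G → G → Fˣ} (hf : f ∈ twoCocycles (1 : G →* RingAut F))
    (x : G) : f x 1 = f 1 1 := by
  simpa using (mem_twoCocycles_one_iff.mp hf x 1 1).symm

lemma mem_twoCocycles_of_bimultiplicative {f : G → G → Fˣ}
    (hl : ∀ x y z, f (x * y) z = f x z * f y z) (hr : ∀ x y z, f x (y * z) = f x y * f x z) :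
    f ∈ twoCocycles (1 : G →* RingAut F) :=
  mem_twoCocycles_one_iff.mpr fun g h k => by
    rw [hl, hr]
    simp [mul_comm, mul_left_comm]

end TrivialAction

section CommPairing

variable {G F : Type*} [Field F]

def commPairing (f : G → G → Fˣ) (x y : G) : Fˣ := f x y / f y x

lemma commPairing_swap (f : G → G → Fˣ) (x y : G) :
    commPairing f y x = (commPairing f x y)⁻¹ := by
  rw [commPairing, commPairing, inv_div]

lemma commPairing_mul (f f' : G → G → Fˣ) (x y : G) :
    commPairing (f * f') x y = commPairing f x y * commPairing f' x y :=
  (div_mul_div_comm _ _ _ _).symm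

variable [CommGroup G] {f : G → G → Fˣ}

lemma commPairing_mul_right (hf : f ∈ twoCocycles (1 : G →* RingAut F)) (x y z : G) :
    commPairing f x (y * z) = commPairing f x y * commPairing f x z := by
  have hc := mem_twoCocycles_one_iff.mp hf
  have e₁ := congrArg Units.val (hc x y z)
  have e₂ := congrArg Units.val (hc y z x)
  have e₃ := congrArg Units.val (hc y x z)
  rw [mul_comm z x] at e₂
  rw [mul_comm y x] at e₃
  push_cast at e₁ e₂ e₃
  rw [commPairing, commPairing, commPairing, div_mul_div_comm, div_eq_div_iff_mul_eq_mul]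
  apply mul_left_cancel (a := f y z)
  apply Units.ext
  push_cast
  linear_combination (f y x * f z x : F) * e₁ + (f x y * f x z : F) * e₂ - (f x y * f z x : F) * e₃

lemma commPairing_mul_left (hf : f ∈ twoCocycles (1 : G →* RingAut F)) (x y z : G) :
    commPairing f (x * y) z = commPairing f x z * commPairing f y z := by
  rw [commPairing_swap, commPairing_mul_right hf, mul_inv, ← commPairing_swap,
    ← commPairing_swap]

def commPairingHom (hf : f ∈ twoCocycles (1 : G →* RingAut F)) (y : G) : G →* Fˣ :=
  MonoidHom.mk' (commPairing f · y) fun x x' => commPairing_mul_left hf x x' y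

lemma commPairing_eq_one_of_mem_twoCoboundaries
    (hf : f ∈ twoCoboundaries (1 : G →* RingAut F)) (x y : G) : commPairing f x y = 1 := by
  obtain ⟨r, hr⟩ := mem_twoCoboundaries_one_iff.mp hf
  rw [commPairing, hr, hr, mul_comm y x, mul_comm (r y), div_self']

end CommPairing

section LiftPow

variable {G F : Type*} [Group G] [Field F]

/-- The `Fˣ`-component of the `n`-th power of the lift `(1, x)` of `x` in the extension of `G`
by `Fˣ` defined by `f`, up to the factor `f 1 1` (see `CocycleExtension.mk_one_pow`). -/
def liftPow (n : ℕ) (f : G → G → Fˣ) (x : G) : Fˣ := ∏ k ∈ range n, f (x ^ k) x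

lemma liftPow_mem_range_powMonoidHom {n : ℕ} {f : G → G → Fˣ}
    (hf : f ∈ twoCoboundaries (1 : G →* RingAut F)) {x : G} (hx : x ^ n = 1) :
    liftPow n f x ∈ (powMonoidHom n : Fˣ →* Fˣ).range := by
  obtain ⟨r, hr⟩ := mem_twoCoboundaries_one_iff.mp hf
  refine ⟨r x, ?_⟩
  have hterm (k : ℕ) : f (x ^ k) x = r x * (r (x ^ k) / r (x ^ (k + 1))) := by
    rw [hr, ← pow_succ, mul_comm (r _), mul_div_assoc]
  rw [powMonoidHom_apply, liftPow, prod_congr rfl fun k _ => hterm k, prod_mul_distrib,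
    prod_const, card_range, prod_range_div' (fun k => r (x ^ k)), hx, pow_zero, div_self',
    mul_one]

end LiftPow

section Extension

variable {G F : Type*} [CommGroup G] [Field F]

/-- The extension `(a, x) * (b, y) = (a * b * f x y, x * y)` of `G` by `Fˣ`. The proofs `hf` and
`hsymm` are parameters only so that the commutative group instance can use them. -/
@[ext]
structure CocycleExtension (f : G → G → Fˣ) (hf : f ∈ twoCocycles (1 : G →* RingAut F))
    (hsymm : ∀ x y, f x y = f y x) where
  unit : Fˣ
  base : G

namespace CocycleExtension

variable {f : G → G → Fˣ} {hf : f ∈ twoCocycles (1 : G →* RingAut F)}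
  {hsymm : ∀ x y, f x y = f y x}

instance : CommGroup (CocycleExtension f hf hsymm) where
  mul u v := ⟨u.unit * v.unit * f u.base v.base, u.base * v.base⟩
  one := ⟨(f 1 1)⁻¹, 1⟩
  inv u := ⟨(u.unit * f u.base u.base⁻¹ * f 1 1)⁻¹, u.base⁻¹⟩
  mul_assoc u v w := by
    refine CocycleExtension.ext ?_ (mul_assoc _ _ _)
    change u.unit * v.unit * f u.base v.base * w.unit * f (u.base * v.base) w.base =
      u.unit * (v.unit * w.unit * f v.base w.base) * f u.base (v.base * w.base)
    have e := congrArg Units.val (mem_twoCocycles_one_iff.mp hf u.base v.base w.base)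
    push_cast at e
    apply Units.ext
    push_cast
    linear_combination (-(u.unit * v.unit * w.unit : F)) * e
  one_mul u := by
    refine CocycleExtension.ext ?_ (one_mul _)
    change (f 1 1)⁻¹ * u.unit * f 1 u.base = u.unit
    rw [twoCocycle_one_left hf u.base]
    simp [mul_comm]
  mul_one u := by
    refine CocycleExtension.ext ?_ (mul_one _)
    change u.unit * (f 1 1)⁻¹ * f u.base 1 = u.unit
    rw [twoCocycle_one_right hf u.base, inv_mul_cancel_right]
  inv_mul_cancel u := by
    refine CocycleExtension.ext ?_ (inv_mul_cancel _)
    change (u.unit * f u.base u.base⁻¹ * f 1 1)⁻¹ * u.unit * f u.base⁻¹ u.base = (f 1 1)⁻¹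
    rw [hsymm]
    group
  mul_comm u v := by
    refine CocycleExtension.ext ?_ (mul_comm _ _)
    change u.unit * v.unit * f u.base v.base = v.unit * u.unit * f v.base u.base
    rw [hsymm, mul_comm u.unit]

lemma unit_mul (u v : CocycleExtension f hf hsymm) :
    (u * v).unit = u.unit * v.unit * f u.base v.base := rfl

def baseHom : CocycleExtension f hf hsymm →* G where
  toFun := base
  map_one' := rfl
  map_mul' _ _ := rfl

def unitHom : Fˣ →* CocycleExtension f hf hsymm where
  toFun a := ⟨(f 1 1)⁻¹ * a, 1⟩
  map_one' := by rw [mul_one]; rfl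
  map_mul' a b := by
    refine CocycleExtension.ext ?_ (one_mul _).symm
    change (f 1 1)⁻¹ * (a * b) = (f 1 1)⁻¹ * a * ((f 1 1)⁻¹ * b) * f 1 1
    simp [mul_assoc, mul_comm, mul_left_comm]

lemma mk_one_pow (x : G) (k : ℕ) :
    (⟨1, x⟩ : CocycleExtension f hf hsymm) ^ k = ⟨(f 1 1)⁻¹ * liftPow k f x, x ^ k⟩ := by
  induction k with
  | zero =>
    rw [pow_zero, pow_zero, liftPow, prod_range_zero, mul_one]
    rfl
  | succ k ih =>
    rw [pow_succ, ih]
    refine CocycleExtension.ext ?_ (pow_succ x k).symm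
    change (f 1 1)⁻¹ * liftPow k f x * 1 * f (x ^ k) x = (f 1 1)⁻¹ * liftPow (k + 1) f x
    rw [liftPow, liftPow, prod_range_succ, mul_one, mul_assoc]

end CocycleExtension

end Extension

/-- `Fˣ ⧸ (Fˣ)^n` as a type synonym with its own instance: with the bare quotient, unifying the
instances on `Fin s → Fˣ ⧸ (powMonoidHom n).range` times out. -/
def UnitsModPow (F : Type*) [Field F] (n : ℕ) : Type _ := Fˣ ⧸ (powMonoidHom n : Fˣ →* Fˣ).range

namespace UnitsModPow

variable {F : Type*} [Field F] {n : ℕ}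

instance : CommGroup (UnitsModPow F n) := QuotientGroup.Quotient.commGroup _

def mk : Fˣ →* UnitsModPow F n := QuotientGroup.mk' _

lemma mk_surjective : Function.Surjective (mk : Fˣ →* UnitsModPow F n) :=
  QuotientGroup.mk'_surjective _

lemma mk_eq_one_iff {a : Fˣ} :
    mk a = (1 : UnitsModPow F n) ↔ a ∈ (powMonoidHom n : Fˣ →* Fˣ).range :=
  QuotientGroup.eq_one_iff a

end UnitsModPow

lemma UnitsModPow.card_eq_gcd {F : Type*} [Field F] [Finite F] (n : ℕ) :
    Nat.card (UnitsModPow F n) = (Nat.card Fˣ).gcd n := by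
  rw [← IsCyclic.index_powMonoidHom_range, Subgroup.index_eq_card]
  rfl

lemma card_rootsOfUnity_eq_gcd {F : Type*} [Field F] [Finite F] (n : ℕ) :
    Nat.card (rootsOfUnity n F) = (Nat.card Fˣ).gcd n := by
  rw [rootsOfUnity_eq_ker, IsCyclic.card_powMonoidHom_ker]

lemma Nat.div_add_add_mod_div (a b : ℕ) {n : ℕ} (hn : 0 < n) :
    b / n + (a + b % n) / n = (a + b) / n := by
  rw [add_comm, ← Nat.add_mul_div_left _ _ hn, add_assoc, Nat.mod_add_div]

lemma sum_range_mod_add_one_div {n : ℕ} (hn : 0 < n) :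
    ∑ m ∈ range n, (m % n + 1) / n = 1 := by
  obtain ⟨k, rfl⟩ := Nat.exists_eq_add_one_of_ne_zero hn.ne'
  rw [sum_range_succ, sum_eq_zero fun m hm => ?_, Nat.mod_eq_of_lt k.lt_add_one,
    Nat.div_self hn, zero_add]
  rw [mem_range] at hm
  rw [Nat.mod_eq_of_lt (by omega), Nat.div_eq_of_lt (by omega)]

def MulEquiv.sumArrowEquivProdArrow (α β M : Type*) [Mul M] :
    (α ⊕ β → M) ≃* (α → M) × (β → M) :=
  { Equiv.sumArrowEquivProdArrow α β M with map_mul' := fun _ _ => rfl }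

lemma card_pairs_sum_eq_choose (s : ℕ) :
    Fintype.card ({q : Fin s × Fin s // q.1 < q.2} ⊕ Fin s) = (s + 1).choose 2 := by
  rw [Fintype.card_sum, Fintype.card_subtype, Fintype.card_product_filter_lt, Fintype.card_fin,
    Nat.choose_succ_succ', Nat.choose_one_right, add_comm]

section ElementaryAbelian

variable {n s : ℕ} {F : Type*} [Field F]

local notation "𝔾" => Fin s → Multiplicative (ZMod n)

def basisElem (i : Fin s) : 𝔾 := Pi.mulSingle i (Multiplicative.ofAdd 1)

lemma basisElem_pow (i : Fin s) (k : ℕ) :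
    basisElem i ^ k = (Pi.mulSingle i (Multiplicative.ofAdd (k : ZMod n)) : 𝔾) := by
  rw [basisElem, ← Pi.mulSingle_pow, ← ofAdd_nsmul, nsmul_one]

lemma val_basisElem_pow_apply (i j : Fin s) (k : ℕ) :
    ((basisElem (n := n) j ^ k) i).toAdd.val = if i = j then k % n else 0 := by
  rw [basisElem_pow, Pi.mulSingle_apply]
  split_ifs <;> simp [ZMod.val_natCast]

lemma val_basisElem_apply [Fact (1 < n)] (i j : Fin s) :
    (basisElem (n := n) j i).toAdd.val = if i = j then 1 else 0 := by
  simpa [Nat.mod_eq_of_lt (Fact.out : 1 < n)] using val_basisElem_pow_apply (n := n) i j 1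

lemma pi_zmod_pow_eq_one (x : 𝔾) : x ^ n = 1 := by
  funext i
  change Multiplicative.ofAdd (n • (x i).toAdd) = 1
  simp

lemma prod_basisElem_pow [NeZero n] (x : 𝔾) : ∏ i, basisElem i ^ (x i).toAdd.val = x := by
  simp_rw [basisElem_pow, ZMod.natCast_zmod_val, ofAdd_toAdd]
  exact univ_prod_mulSingle x

lemma pow_val_add [NeZero n] {M : Type*} [Monoid M] {z : M} (hz : z ^ n = 1) (a b : ZMod n) :
    z ^ (a + b).val = z ^ a.val * z ^ b.val := by
  rw [ZMod.val_add, ← pow_eq_pow_mod _ hz, pow_add]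

def liftBasis [NeZero n] {M : Type*} [CommMonoid M] (v : Fin s → M) (hv : ∀ i, v i ^ n = 1) :
    𝔾 →* M where
  toFun x := ∏ i, v i ^ (x i).toAdd.val
  map_one' := by simp
  map_mul' x y := by
    rw [← prod_mul_distrib]
    exact prod_congr rfl fun i _ => pow_val_add (hv i) _ _

lemma liftBasis_basisElem [Fact (1 < n)] {M : Type*} [CommMonoid M] (v : Fin s → M)
    (hv : ∀ i, v i ^ n = 1) (i : Fin s) : liftBasis v hv (basisElem i) = v i := by
  simp [liftBasis, val_basisElem_apply]

lemma MonoidHom.ext_basisElem [NeZero n] {M : Type*} [CommMonoid M] {φ ψ : 𝔾 →* M}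
    (h : ∀ i, φ (basisElem i) = ψ (basisElem i)) : φ = ψ := by
  refine MonoidHom.ext fun x => ?_
  rw [← prod_basisElem_pow x, map_prod, map_prod]
  simp only [map_pow, h]

lemma symmetric_of_commPairing_basisElem [NeZero n] {f : 𝔾 → 𝔾 → Fˣ}
    (hf : f ∈ twoCocycles (1 : 𝔾 →* RingAut F))
    (h : ∀ i j, i < j → commPairing f (basisElem i) (basisElem j) = 1) (x y : 𝔾) :
    f x y = f y x := by
  have h_basis (i j) : commPairing f (basisElem i) (basisElem j) = 1 := by
    rcases lt_trichotomy i j with hij | rfl | hij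
    · exact h i j hij
    · exact div_self' _
    · rw [commPairing_swap, h j i hij, inv_one]
  have h_left (j) : commPairingHom hf (basisElem j) = 1 :=
    MonoidHom.ext_basisElem fun i => h_basis i j
  have h_right (x) : commPairingHom hf x = 1 := MonoidHom.ext_basisElem fun j => by
    change commPairing f (basisElem j) x = 1
    rw [commPairing_swap, inv_eq_one]
    exact DFunLike.congr_fun (h_left j) x
  exact div_eq_one.mp (DFunLike.congr_fun (h_right y) x)

open CocycleExtension in
/-- A splitting of the extension: the lifts `(1, e_i) * (d_i, 1)⁻¹` have order dividing `n`, so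
they define a section `σ`, and `f` is the coboundary of `x ↦ (σ x).unit⁻¹`. -/
theorem mem_twoCoboundaries_of_symmetric [Fact (1 < n)] {f : 𝔾 → 𝔾 → Fˣ}
    (hf : f ∈ twoCocycles (1 : 𝔾 →* RingAut F)) (hsymm : ∀ x y, f x y = f y x)
    (hpow : ∀ i, ∃ d : Fˣ, liftPow n f (basisElem i) = d ^ n) :
    f ∈ twoCoboundaries (1 : 𝔾 →* RingAut F) := by
  choose d hd using hpow
  let v (i : Fin s) : CocycleExtension f hf hsymm := ⟨1, basisElem i⟩ * (unitHom (d i))⁻¹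
  have hv (i) : v i ^ n = 1 := by
    rw [mul_pow, mk_one_pow, pi_zmod_pow_eq_one, inv_pow, ← map_pow, ← hd]
    exact mul_inv_cancel _
  let σ := liftBasis v hv
  have hσ : baseHom.comp σ = MonoidHom.id _ := MonoidHom.ext_basisElem fun i => by
    rw [MonoidHom.comp_apply, liftBasis_basisElem, map_mul, map_inv]
    exact mul_inv_eq_of_eq_mul (mul_one _).symm
  refine mem_twoCoboundaries_one_iff.mpr ⟨fun x => (σ x).unit⁻¹, fun x y => ?_⟩
  have hbase (x) : (σ x).base = x := DFunLike.congr_fun hσ x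
  have hmul := congrArg unit (map_mul σ x y)
  rw [unit_mul, hbase, hbase] at hmul
  change f x y = (σ x).unit⁻¹ * (σ y).unit⁻¹ / (σ (x * y)).unit⁻¹
  rw [hmul]
  simp [mul_comm]

variable (n s F) in
abbrev H2Invariants :=
  ({q : Fin s × Fin s // q.1 < q.2} → rootsOfUnity n F) × (Fin s → UnitsModPow F n)

lemma commPairing_pow_eq_one {f : 𝔾 → 𝔾 → Fˣ} (hf : f ∈ twoCocycles (1 : 𝔾 →* RingAut F))
    (x y : 𝔾) : commPairing f x y ^ n = 1 := by
  change commPairingHom hf y x ^ n = 1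
  rw [← map_pow, pi_zmod_pow_eq_one, map_one]

def cocycleInvariants : twoCocycles (1 : 𝔾 →* RingAut F) →* H2Invariants n s F where
  toFun f := (fun q => ⟨commPairing f.1 (basisElem q.1.1) (basisElem q.1.2),
      commPairing_pow_eq_one f.2 _ _⟩,
    fun i => UnitsModPow.mk (liftPow n f.1 (basisElem i)))
  map_one' := Prod.ext (funext fun _ => Subtype.ext (div_one 1))
    (funext fun _ => by simp [liftPow])
  map_mul' f f' := Prod.ext (funext fun _ => Subtype.ext (commPairing_mul _ _ _ _))
    (funext fun _ => by simp [liftPow, prod_mul_distrib])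

lemma cocycleInvariants_fst_apply (f : twoCocycles (1 : 𝔾 →* RingAut F))
    (q : {q : Fin s × Fin s // q.1 < q.2}) :
    ((cocycleInvariants f).1 q : Fˣ) = commPairing f.1 (basisElem q.1.1) (basisElem q.1.2) :=
  rfl

lemma cocycleInvariants_snd_apply (f : twoCocycles (1 : 𝔾 →* RingAut F)) (i : Fin s) :
    (cocycleInvariants f).2 i = UnitsModPow.mk (liftPow n f.1 (basisElem i)) := rfl

lemma ker_cocycleInvariants [Fact (1 < n)] :
    (cocycleInvariants : twoCocycles (1 : 𝔾 →* RingAut F) →* _).ker =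
      (twoCoboundaries 1).subgroupOf (twoCocycles 1) := by
  ext f
  rw [MonoidHom.mem_ker, Subgroup.mem_subgroupOf]
  constructor
  · intro hf
    refine mem_twoCoboundaries_of_symmetric f.2
      (symmetric_of_commPairing_basisElem f.2 fun i j hij => ?_) fun i => ?_
    · rw [← cocycleInvariants_fst_apply f ⟨(i, j), hij⟩, hf]
      rfl
    · have hi := congrFun (congrArg Prod.snd hf) i
      rw [cocycleInvariants_snd_apply] at hi
      obtain ⟨d, hd⟩ := UnitsModPow.mk_eq_one_iff.mp hi
      exact ⟨d, hd.symm⟩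
  · intro hf
    refine Prod.ext (funext fun q => Subtype.ext ?_) (funext fun i => ?_)
    · exact (cocycleInvariants_fst_apply f q).trans
        (commPairing_eq_one_of_mem_twoCoboundaries hf _ _)
    · exact (cocycleInvariants_snd_apply f i).trans <| UnitsModPow.mk_eq_one_iff.mpr
        (liftPow_mem_range_powMonoidHom hf (pi_zmod_pow_eq_one _))

def pairingCocycle [NeZero n] (i j : Fin s) (ζ : rootsOfUnity n F) :
    twoCocycles (1 : 𝔾 →* RingAut F) :=
  ⟨fun x y => (ζ : Fˣ) ^ ((x i).toAdd.val * (y j).toAdd.val), by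
    have hζ (m : ℕ) : ((ζ : Fˣ) ^ m) ^ n = 1 := by
      rw [← pow_mul, mul_comm, pow_mul, (mem_rootsOfUnity n _).mp ζ.2, one_pow]
    refine mem_twoCocycles_of_bimultiplicative (fun x y z => ?_) fun x y z => ?_
    · simp only [Pi.mul_apply, toAdd_mul, pow_mul']
      exact pow_val_add (hζ _) _ _
    · simp only [Pi.mul_apply, toAdd_mul, pow_mul]
      exact pow_val_add (hζ _) _ _⟩

/-- The pullback along the `i`-th coordinate of the carry cocycle of `ℤ/n` with value `a`. -/
def carryCocycle [NeZero n] (i : Fin s) (a : Fˣ) : twoCocycles (1 : 𝔾 →* RingAut F) :=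
  ⟨fun x y => a ^ (((x i).toAdd.val + (y i).toAdd.val) / n), by
    refine mem_twoCocycles_one_iff.mpr fun x y z => ?_
    simp only [Pi.mul_apply, toAdd_mul, ZMod.val_add, ← pow_add]
    rw [Nat.div_add_add_mod_div _ _ (NeZero.pos n), add_comm ((_ + _) % n),
      Nat.div_add_add_mod_div _ _ (NeZero.pos n)]
    ac_rfl⟩

section StandardCocycles

variable [Fact (1 < n)]

lemma pairingCocycle_basisElem (i j k l : Fin s) (ζ : rootsOfUnity n F) :
    (pairingCocycle i j ζ).1 (basisElem k) (basisElem l) =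
      if i = k ∧ j = l then (ζ : Fˣ) else 1 := by
  simp only [pairingCocycle, val_basisElem_apply]
  split_ifs <;> simp_all

lemma cocycleInvariants_pairingCocycle {i j : Fin s} (hij : i < j) (ζ : rootsOfUnity n F) :
    cocycleInvariants (pairingCocycle i j ζ) = (Pi.mulSingle ⟨(i, j), hij⟩ ζ, 1) := by
  refine Prod.ext (funext fun q => Subtype.ext ?_) (funext fun k => ?_)
  · obtain ⟨⟨k, l⟩, hkl⟩ := q
    have hlk : ¬ (i = l ∧ j = k) := fun ⟨hil, hjk⟩ => (hij.trans (hil ▸ hjk ▸ hkl)).false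
    rw [cocycleInvariants_fst_apply, commPairing, pairingCocycle_basisElem,
      pairingCocycle_basisElem, if_neg hlk, div_one]
    simp only [Pi.mulSingle_apply, Subtype.mk.injEq, Prod.mk.injEq, eq_comm]
    split_ifs <;> rfl
  · rw [cocycleInvariants_snd_apply]
    simp only [liftPow, pairingCocycle, val_basisElem_pow_apply, val_basisElem_apply]
    have h_exp (m : ℕ) : (if i = k then m % n else 0) * (if j = k then 1 else 0) = 0 := by
      split_ifs <;> simp_all
    simp only [h_exp, pow_zero, prod_const_one]
    rfl

lemma cocycleInvariants_carryCocycle (i : Fin s) (a : Fˣ) :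
    cocycleInvariants (carryCocycle (n := n) i a) = (1, Pi.mulSingle i (UnitsModPow.mk a)) := by
  refine Prod.ext (funext fun q => Subtype.ext ?_) (funext fun k => ?_)
  · rw [cocycleInvariants_fst_apply]
    exact div_eq_one.mpr (by simp only [carryCocycle, add_comm])
  · rw [cocycleInvariants_snd_apply]
    change _ = (Pi.mulSingle i (UnitsModPow.mk a) : Fin s → UnitsModPow F n) k
    rcases eq_or_ne k i with rfl | hki
    · rw [Pi.mulSingle_eq_same]
      simp only [liftPow, carryCocycle, val_basisElem_pow_apply, val_basisElem_apply, if_true]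
      rw [prod_pow_eq_pow_sum, sum_range_mod_add_one_div (NeZero.pos n), pow_one]
    · rw [Pi.mulSingle_eq_of_ne hki]
      simp only [liftPow, carryCocycle, val_basisElem_pow_apply, val_basisElem_apply,
        if_neg hki.symm, add_zero, Nat.zero_div, pow_zero, prod_const_one, map_one]

lemma cocycleInvariants_surjective :
    Function.Surjective (cocycleInvariants : twoCocycles (1 : 𝔾 →* RingAut F) →* _) := by
  intro t
  choose a ha using fun i => UnitsModPow.mk_surjective (t.2 i)
  refine ⟨(∏ q : {q : Fin s × Fin s // q.1 < q.2}, pairingCocycle q.1.1 q.1.2 (t.1 q)) *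
    ∏ i, carryCocycle i (a i), ?_⟩
  rw [map_mul, map_prod, map_prod,
    prod_congr rfl fun q _ => cocycleInvariants_pairingCocycle q.2 (t.1 q),
    prod_congr rfl fun i _ => cocycleInvariants_carryCocycle i (a i)]
  refine Prod.ext ?_ ?_
  · rw [Prod.fst_mul, Prod.fst_prod, Prod.fst_prod]
    simp only [prod_const_one, mul_one]
    exact univ_prod_mulSingle t.1
  · rw [Prod.snd_mul, Prod.snd_prod, Prod.snd_prod]
    simp only [prod_const_one, one_mul, ha]
    exact univ_prod_mulSingle t.2

end StandardCocycles

noncomputable def H2.mulEquivInvariants [Fact (1 < n)] :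
    H2 (1 : 𝔾 →* RingAut F) ≃* H2Invariants n s F :=
  (QuotientGroup.quotientMulEquivOfEq ker_cocycleInvariants.symm).trans
    (QuotientGroup.quotientKerEquivOfSurjective _ cocycleInvariants_surjective)

end ElementaryAbelian

noncomputable def H2Invariants.mulEquivOfCard {p s : ℕ} [Fact p.Prime] {F : Type*} [Field F]
    (h₁ : Nat.card (rootsOfUnity p F) = p) (h₂ : Nat.card (UnitsModPow F p) = p) :
    H2Invariants p s F ≃* (Fin ((s + 1).choose 2) → Multiplicative (ZMod p)) :=
  have hC : Nat.card (Multiplicative (ZMod p)) = p := by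
    rw [Nat.card_congr Multiplicative.toAdd, Nat.card_zmod]
  ((MulEquiv.prodCongr (MulEquiv.piCongrRight fun _ => mulEquivOfPrimeCardEq h₁ hC)
    (MulEquiv.piCongrRight fun _ => mulEquivOfPrimeCardEq h₂ hC)).trans
    (MulEquiv.sumArrowEquivProdArrow _ _ _).symm).trans
    (MulEquiv.arrowCongr (Fintype.equivFinOfCardEq (card_pairs_sum_eq_choose s))
      (MulEquiv.refl _))

theorem H2_elementary_abelian_over_finite_field_general {F : Type*} [Field F] [Fintype F]
    (p q r s : ℕ) (hp : p.Prime)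
    (hF : Fintype.card F = q ^ r) :
    (¬ p ∣ q ^ r - 1 →
      Nat.card (H2 (1 : (Fin s → Multiplicative (ZMod p)) →* RingAut F)) = 1) ∧
    (p ∣ q ^ r - 1 →
      Nonempty (H2 (1 : (Fin s → Multiplicative (ZMod p)) →* RingAut F) ≃*
        (Fin ((s + 1).choose 2) → Multiplicative (ZMod p)))) := by
  have : Fact p.Prime := ⟨hp⟩
  have : Fact (1 < p) := ⟨hp.one_lt⟩
  have hcard : Nat.card Fˣ = q ^ r - 1 := by rw [Nat.card_units, Nat.card_eq_fintype_card, hF]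
  have e := H2.mulEquivInvariants (n := p) (s := s) (F := F)
  refine ⟨fun hndvd => ?_, fun hdvd => ?_⟩
  · have hgcd : (Nat.card Fˣ).gcd p = 1 :=
      ((Nat.Prime.coprime_iff_not_dvd hp).mpr (hcard ▸ hndvd)).symm
    rw [Nat.card_congr e.toEquiv, Nat.card_prod, Nat.card_pi, Nat.card_pi,
      card_rootsOfUnity_eq_gcd, UnitsModPow.card_eq_gcd, hgcd]
    simp
  · have hgcd : (Nat.card Fˣ).gcd p = p := Nat.gcd_eq_right (hcard ▸ hdvd)
    exact ⟨e.trans (H2Invariants.mulEquivOfCard ((card_rootsOfUnity_eq_gcd p).trans hgcd)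
      ((UnitsModPow.card_eq_gcd p).trans hgcd))⟩

/-- let `F = F_{q^r}` be the field with `q^r` elements, with trivial
action of the elementary abelian group `(C_p)^s`. If `p ∤ q^r - 1` then
`H²((C_p)^s, F^*)` is trivial; if `p ∣ q^r - 1` then `H²((C_p)^s, F^*)` is isomorphic
to the elementary abelian `p`-group of rank `(s+1 choose 2)`. -/
theorem H2_elementary_abelian_over_finite_field {F : Type*} [Field F] [Fintype F]
    (p q r s : ℕ) (hp : p.Prime) (hq : q.Prime) (hr : 0 < r) (hs : 0 < s)
    (hF : Fintype.card F = q ^ r) :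
    (¬ p ∣ q ^ r - 1 →
      Nat.card (H2 (1 : (Fin s → Multiplicative (ZMod p)) →* RingAut F)) = 1) ∧
    (p ∣ q ^ r - 1 →
      Nonempty (H2 (1 : (Fin s → Multiplicative (ZMod p)) →* RingAut F) ≃*
        (Fin ((s + 1).choose 2) → Multiplicative (ZMod p)))) :=
  H2_elementary_abelian_over_finite_field_general p q r s hp hF
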